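/- Let w' be obtained from a nanoword w by the positive elementary move II⁻, i.e. w = xyz and w' = xAByBAz where A, B are two new letters with sgn(B) = −sgn(A). Then ⟨XXYY, w'⟩ = ⟨XXYY, w⟩, ⟨XYXY, w'⟩ = ⟨XYXY, w⟩, and ⟨XYYX, w'⟩ = ⟨XYYX, w⟩ − 1; moreover the number of letters increases by 2 and the total sign sum Σ_a sgn(a) is unchanged. -/

import Mathlib

open Finset

/-- The canonical pattern of a word: each position is labelled by the index of the
first occurrence of its letter. Two words are isomorphic iff they have the same pattern. -/
def patternOf {α : Type*} [DecidableEq α] (l : List α) : List ℕ :=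
  l.map (fun a => l.idxOf a)

/-- The sub-word of `w` determined by a set `S` of letters: read, in order, exactly
those values of `w` lying in `S`. -/
def subword {α : Type*} [DecidableEq α] (w : List α) (S : Finset α) : List α :=
  w.filter (fun a => decide (a ∈ S))

/-- The pairing `⟨v, w⟩`: the sum, over all subsets `S` of the alphabet of `w` whose
induced sub-word is isomorphic to the pattern `v`, of `∏_{a ∈ S} sgn a`. -/
def pair {α : Type*} [DecidableEq α] (v : List ℕ) (w : List α) (sgn : α → ℤ) : ℤ :=
  ∑ S ∈ w.toFinset.powerset,
    if patternOf (subword w S) = patternOf v then ∏ a ∈ S, sgn a else 0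

/-!
Write `w = xyz` and `w' = xAByBAz`. A letter set `S` avoiding `A` and `B` induces the same
sub-word in `w` and `w'`. The sets `S ∪ {A}` and `S ∪ {B}` induce sub-words differing only by
renaming `A ↔ B`, hence of the same pattern, and their signs are opposite, so they cancel.
A set `S ∪ {A, B}` with `S` nonempty induces a sub-word of length more than `4`, so it matches no
pattern of length `4`; what remains is `{A, B}` itself, whose sub-word `ABBA` is of type `XYYX`
and has sign `sgn A * sgn B = -1`.
-/

section

variable {α β : Type*} [DecidableEq α] [DecidableEq β]

theorem idxOf_map_of_injective {f : α → β} (hf : Function.Injective f) (l : List α) (a : α) :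
    (l.map f).idxOf (f a) = l.idxOf a := by
  simp only [List.idxOf, List.findIdx_map, Function.comp_def, hf.beq_eq]

theorem patternOf_map_of_injective {f : α → β} (hf : Function.Injective f) (l : List α) :
    patternOf (l.map f) = patternOf l := by
  simp [patternOf, Function.comp_def, idxOf_map_of_injective hf]

theorem length_patternOf (l : List α) : (patternOf l).length = l.length :=
  List.length_map _

section subword

variable (S : Finset α)

@[simp]
theorem subword_nil : subword [] S = [] := rfl

@[simp]
theorem subword_cons (a : α) (l : List α) :
    subword (a :: l) S = if a ∈ S then a :: subword l S else subword l S := by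
  simp only [subword, List.filter_cons, decide_eq_true_eq]

@[simp]
theorem subword_append (l₁ l₂ : List α) :
    subword (l₁ ++ l₂) S = subword l₁ S ++ subword l₂ S :=
  List.filter_append _ _

@[simp]
theorem subword_empty (l : List α) : subword l ∅ = [] := by
  simp [subword]

theorem mem_subword {l : List α} {a : α} : a ∈ subword l S ↔ a ∈ l ∧ a ∈ S := by
  simp [subword]

theorem subword_insert_of_notMem {l : List α} {c : α} (hc : c ∉ l) :
    subword l (insert c S) = subword l S :=
  List.filter_congr fun a ha => by
    simp [mem_insert, show a ≠ c from fun h => hc (h ▸ ha)]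

theorem notMem_subword {l : List α} {a : α} (h : a ∉ S) : a ∉ subword l S :=
  fun ha => h ((mem_subword S).1 ha).2

theorem subword_ne_nil {l : List α} {a : α} (hl : a ∈ l) (hS : a ∈ S) : subword l S ≠ [] :=
  List.ne_nil_of_mem ((mem_subword S).2 ⟨hl, hS⟩)

end subword

theorem map_swap_of_notMem {l : List α} {A B : α} (hA : A ∉ l) (hB : B ∉ l) :
    l.map (Equiv.swap A B) = l :=
  (List.map_congr_left fun _ ha =>
    Equiv.swap_apply_of_ne_of_ne (ne_of_mem_of_not_mem ha hA) (ne_of_mem_of_not_mem ha hB)).trans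
    l.map_id

def pairTerm (v : List ℕ) (w : List α) (sgn : α → ℤ) (S : Finset α) : ℤ :=
  if patternOf (subword w S) = patternOf v then ∏ a ∈ S, sgn a else 0

theorem pair_eq_sum_pairTerm (v : List ℕ) (w : List α) (sgn : α → ℤ) :
    pair v w sgn = ∑ S ∈ w.toFinset.powerset, pairTerm v w sgn S := rfl

theorem pairTerm_eq_zero_of_length_ne {v : List ℕ} {w : List α} {sgn : α → ℤ} {S : Finset α}
    (h : (subword w S).length ≠ v.length) : pairTerm v w sgn S = 0 :=
  if_neg fun hpat => h (by simpa only [length_patternOf] using congrArg List.length hpat)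

section moveII

variable {x y z : List α} {A B : α}

theorem toFinset_moveII :
    (x ++ [A, B] ++ y ++ [B, A] ++ z).toFinset = insert A (insert B (x ++ y ++ z).toFinset) := by
  ext c
  simp only [List.mem_toFinset, List.mem_append, List.mem_cons, List.not_mem_nil, mem_insert]
  tauto

theorem subword_moveII_of_notMem {S : Finset α} (hAS : A ∉ S) (hBS : B ∉ S) :
    subword (x ++ [A, B] ++ y ++ [B, A] ++ z) S = subword (x ++ y ++ z) S := by
  simp [hAS, hBS]

theorem subword_moveII_insert_left (hA : A ∉ x ++ y ++ z) (hAB : A ≠ B) {S : Finset α}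
    (hBS : B ∉ S) :
    subword (x ++ [A, B] ++ y ++ [B, A] ++ z) (insert A S)
      = subword x S ++ [A] ++ subword y S ++ [A] ++ subword z S := by
  simp only [List.mem_append, not_or] at hA
  simp [subword_insert_of_notMem, hA, hBS, hAB.symm]

theorem subword_moveII_insert_right (hB : B ∉ x ++ y ++ z) (hAB : A ≠ B) {S : Finset α}
    (hAS : A ∉ S) :
    subword (x ++ [A, B] ++ y ++ [B, A] ++ z) (insert B S)
      = subword x S ++ [B] ++ subword y S ++ [B] ++ subword z S := by
  simp only [List.mem_append, not_or] at hB
  simp [subword_insert_of_notMem, hB, hAS, hAB]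

theorem subword_moveII_insert_insert (hA : A ∉ x ++ y ++ z) (hB : B ∉ x ++ y ++ z)
    (S : Finset α) :
    subword (x ++ [A, B] ++ y ++ [B, A] ++ z) (insert A (insert B S))
      = subword x S ++ [A, B] ++ subword y S ++ [B, A] ++ subword z S := by
  simp only [List.mem_append, not_or] at hA hB
  simp [subword_insert_of_notMem, hA, hB]

variable {v : List ℕ} {sgn : α → ℤ}

theorem pairTerm_moveII_insert_add_insert (hA : A ∉ x ++ y ++ z) (hB : B ∉ x ++ y ++ z)
    (hAB : A ≠ B) (hopp : sgn B = -sgn A) {S : Finset α} (hS : S ⊆ (x ++ y ++ z).toFinset) :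
    pairTerm v (x ++ [A, B] ++ y ++ [B, A] ++ z) sgn (insert A S)
      + pairTerm v (x ++ [A, B] ++ y ++ [B, A] ++ z) sgn (insert B S) = 0 := by
  have hAS : A ∉ S := fun h => hA (List.mem_toFinset.1 (hS h))
  have hBS : B ∉ S := fun h => hB (List.mem_toFinset.1 (hS h))
  have h_swap : (subword (x ++ [A, B] ++ y ++ [B, A] ++ z) (insert A S)).map (Equiv.swap A B)
      = subword (x ++ [A, B] ++ y ++ [B, A] ++ z) (insert B S) := by
    rw [subword_moveII_insert_left hA hAB hBS, subword_moveII_insert_right hB hAB hAS]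
    simp [map_swap_of_notMem (notMem_subword S hAS) (notMem_subword S hBS)]
  unfold pairTerm
  rw [← h_swap, patternOf_map_of_injective (Equiv.swap A B).injective, prod_insert hAS,
    prod_insert hBS, hopp]
  split_ifs <;> ring

theorem pairTerm_moveII_insert_insert_of_nonempty (hv : v.length ≤ 4) (hA : A ∉ x ++ y ++ z)
    (hB : B ∉ x ++ y ++ z) {S : Finset α} (hS : S ⊆ (x ++ y ++ z).toFinset) (hne : S.Nonempty) :
    pairTerm v (x ++ [A, B] ++ y ++ [B, A] ++ z) sgn (insert A (insert B S)) = 0 := by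
  obtain ⟨c, hc⟩ := hne
  have h_pos := List.length_pos_of_ne_nil (subword_ne_nil S (List.mem_toFinset.1 (hS hc)) hc)
  apply pairTerm_eq_zero_of_length_ne
  rw [subword_moveII_insert_insert hA hB]
  simp only [subword_append, List.length_append, List.length_cons, List.length_nil] at h_pos ⊢
  omega

theorem pairTerm_moveII_insert_insert_empty (hA : A ∉ x ++ y ++ z) (hB : B ∉ x ++ y ++ z)
    (hAB : A ≠ B) :
    pairTerm v (x ++ [A, B] ++ y ++ [B, A] ++ z) sgn (insert A (insert B ∅))
      = if patternOf [A, B, B, A] = patternOf v then sgn A * sgn B else 0 := by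
  rw [pairTerm, subword_moveII_insert_insert hA hB, insert_empty, prod_pair hAB]
  simp

theorem pair_moveII (hv : v.length ≤ 4) (hA : A ∉ x ++ y ++ z) (hB : B ∉ x ++ y ++ z)
    (hAB : A ≠ B) (hopp : sgn B = -sgn A) :
    pair v (x ++ [A, B] ++ y ++ [B, A] ++ z) sgn
      = pair v (x ++ y ++ z) sgn
        + if patternOf [A, B, B, A] = patternOf v then sgn A * sgn B else 0 := by
  set W := (x ++ y ++ z).toFinset
  have hBW : B ∉ W := fun h => hB (List.mem_toFinset.1 h)
  have hAW : A ∉ insert B W := by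
    simpa [W, hAB] using hA
  rw [pair_eq_sum_pairTerm, toFinset_moveII, sum_powerset_insert hAW, sum_powerset_insert hBW,
    sum_powerset_insert hBW, ← pairTerm_moveII_insert_insert_empty hA hB hAB]
  set f := pairTerm v (x ++ [A, B] ++ y ++ [B, A] ++ z) sgn
  have h_avoiding : ∑ S ∈ W.powerset, f S = pair v (x ++ y ++ z) sgn :=
    sum_congr rfl fun S hS => by
      have hS := mem_powerset.1 hS
      simp only [f, pairTerm, subword_moveII_of_notMem (fun h => hA (List.mem_toFinset.1 (hS h)))
        (fun h => hB (List.mem_toFinset.1 (hS h)))]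
  have h_single : ∑ S ∈ W.powerset, (f (insert A S) + f (insert B S)) = 0 :=
    sum_eq_zero fun S hS => pairTerm_moveII_insert_add_insert hA hB hAB hopp (mem_powerset.1 hS)
  have h_both : ∑ S ∈ W.powerset, f (insert A (insert B S)) = f (insert A (insert B ∅)) :=
    sum_eq_single_of_mem ∅ (empty_mem_powerset W) fun S hS hne =>
      pairTerm_moveII_insert_insert_of_nonempty hv hA hB (mem_powerset.1 hS)
        (nonempty_iff_ne_empty.2 hne)
  rw [sum_add_distrib] at h_single
  linear_combination h_avoiding + h_single + h_both

end moveII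

end

theorem move_II_minus_effect_general {α : Type*} [DecidableEq α]
    (x y z : List α) (A B : α) (sgn : α → ℤ)
    (hsgn : ∀ c, sgn c = 1 ∨ sgn c = -1)
    (hA : A ∉ x ++ y ++ z) (hB : B ∉ x ++ y ++ z) (hAB : A ≠ B)
    (hopp : sgn B = -sgn A) :
    pair [0,0,1,1] (x ++ [A, B] ++ y ++ [B, A] ++ z) sgn
        = pair [0,0,1,1] (x ++ y ++ z) sgn ∧
    pair [0,1,0,1] (x ++ [A, B] ++ y ++ [B, A] ++ z) sgn
        = pair [0,1,0,1] (x ++ y ++ z) sgn ∧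
    pair [0,1,1,0] (x ++ [A, B] ++ y ++ [B, A] ++ z) sgn
        = pair [0,1,1,0] (x ++ y ++ z) sgn - 1 ∧
    (x ++ [A, B] ++ y ++ [B, A] ++ z).toFinset.card
        = (x ++ y ++ z).toFinset.card + 2 ∧
    ∑ c ∈ (x ++ [A, B] ++ y ++ [B, A] ++ z).toFinset, sgn c
        = ∑ c ∈ (x ++ y ++ z).toFinset, sgn c := by
  have h_ABBA : patternOf [A, B, B, A] = [0, 1, 1, 0] := by
    simp [patternOf, List.idxOf_cons, beq_false_of_ne hAB]
  have h_sign : sgn A * sgn B = -1 := by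
    rcases hsgn A with h | h <;> simp [hopp, h]
  have hBW : B ∉ (x ++ y ++ z).toFinset := by simpa using hB
  have hAW : A ∉ insert B (x ++ y ++ z).toFinset := by simpa [hAB] using hA
  refine ⟨?_, ?_, ?_, ?_, ?_⟩
  · rw [pair_moveII le_rfl hA hB hAB hopp, h_ABBA, if_neg (by decide), add_zero]
  · rw [pair_moveII le_rfl hA hB hAB hopp, h_ABBA, if_neg (by decide), add_zero]
  · rw [pair_moveII le_rfl hA hB hAB hopp, h_ABBA, if_pos (by decide), h_sign, sub_eq_add_neg]
  · rw [toFinset_moveII, card_insert_of_notMem hAW, card_insert_of_notMem hBW]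
  · rw [toFinset_moveII, sum_insert hAW, sum_insert hBW, hopp, add_neg_cancel_left]

/-- effect of the positive elementary move II⁻, `xyz ↦ xAByBAz` with
`A, B` new letters of opposite signs: `⟨XXYY⟩` and `⟨XYXY⟩` are unchanged,
`⟨XYYX⟩` decreases by 1, the number of letters increases by 2, and the total sign
sum is unchanged. -/
theorem move_II_minus_effect {α : Type*} [DecidableEq α]
    (x y z : List α) (A B : α) (sgn : α → ℤ)
    (hGauss : ∀ c ∈ x ++ y ++ z, (x ++ y ++ z).count c = 2)
    (hsgn : ∀ c, sgn c = 1 ∨ sgn c = -1)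
    (hA : A ∉ x ++ y ++ z) (hB : B ∉ x ++ y ++ z) (hAB : A ≠ B)
    (hopp : sgn B = -sgn A) :
    pair [0,0,1,1] (x ++ [A, B] ++ y ++ [B, A] ++ z) sgn
        = pair [0,0,1,1] (x ++ y ++ z) sgn ∧
    pair [0,1,0,1] (x ++ [A, B] ++ y ++ [B, A] ++ z) sgn
        = pair [0,1,0,1] (x ++ y ++ z) sgn ∧
    pair [0,1,1,0] (x ++ [A, B] ++ y ++ [B, A] ++ z) sgn
        = pair [0,1,1,0] (x ++ y ++ z) sgn - 1 ∧
    (x ++ [A, B] ++ y ++ [B, A] ++ z).toFinset.card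
        = (x ++ y ++ z).toFinset.card + 2 ∧
    ∑ c ∈ (x ++ [A, B] ++ y ++ [B, A] ++ z).toFinset, sgn c
        = ∑ c ∈ (x ++ y ++ z).toFinset, sgn c :=
  move_II_minus_effect_general x y z A B sgn hsgn hA hB hAB hopp
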